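/- arXiv:1004.1083 — 3 statements merged into one kernel-verified Lean document; each statement's English description precedes it below -/
import Mathlib

section
/- Let a > 0 and let k be an even nonnegative integer. The function s ↦ ∫_{−∞}^{∞} (x² + a²)^{−s} xᵏ dx, defined for Re(s) > (k+1)/2, extends meromorphically and satisfies: minus its derivative at s = 0, after multiplying the integrand by iᵏ (i.e. replacing xᵏ by (ix)ᵏ), equals π ∫_{−a}^{a} xᵏ dx = 2π aᵏ⁺¹/(k+1) · iᵏ·(−1)^{k/2}. Equivalently, the regularized integral ∫^∧ (ix)ᵏ log(x² + a²) dx equals π ∫_{−a}^{a} xᵏ dx. -/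
/-!
Substituting `x = a √(y / (1 - y))` on `x > 0` turns `∫ (x² + a²)^(-s) xᵏ dx` into
`a^(k+1-2s) B(u, s - u)` with `u = (k+1)/2`, which is the Gamma quotient `F s`. Since `1/Γ` has a
simple zero at `0` with derivative `1`, `F'(0) = a^(k+1) Γ(u) Γ(-u)`, and the reflection formula
gives `Γ(u) Γ(-u) = -π / (u sin πu) = -π / (u iᵏ)` for even `k`.
-/

open Complex MeasureTheory Set
open scoped Real

lemma integral_eq_two_smul_integral_Ioi_of_even {E : Type*} [NormedAddCommGroup E]
    [NormedSpace ℝ E] {f : ℝ → E} (hf : ∀ x, f (-x) = f x) :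
    ∫ x, f x = (2 : ℝ) • ∫ x in Ioi 0, f x := by
  have hneg : MeasurableEmbedding fun x : ℝ => -x := (Homeomorph.neg ℝ).measurableEmbedding
  have hmap : Measure.map (fun x : ℝ => -x) volume = volume := Measure.map_neg_eq_self volume
  by_cases h : IntegrableOn f (Ioi 0)
  · have hIic : IntegrableOn f (Iic 0) := by
      rw [← hmap, hneg.integrableOn_map_iff]
      simpa [Function.comp_def, hf, integrableOn_Ici_iff_integrableOn_Ioi] using h
    rw [← intervalIntegral.integral_Iic_add_Ioi hIic h, ← neg_zero, ← integral_comp_neg_Ioi,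
      neg_zero, two_smul]
    simp only [hf]
  · rw [integral_undef fun hi => h hi.integrableOn, integral_undef h, smul_zero]

lemma ofReal_cpow_def_of_pos {t : ℝ} (ht : 0 < t) (w : ℂ) :
    (t : ℂ) ^ w = exp (Real.log t * w) := by
  rw [cpow_def_of_ne_zero (ofReal_ne_zero.2 ht.ne'), ofReal_log ht.le]

noncomputable def betaSubst (a y : ℝ) : ℝ := a * √(y / (1 - y))

section BetaSubst

variable {a y : ℝ}

lemma betaSubst_sq (hy : y ∈ Ioo 0 1) : betaSubst a y ^ 2 = a ^ 2 * (y / (1 - y)) := by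
  rw [betaSubst, mul_pow, Real.sq_sqrt (div_pos hy.1 (by linarith [hy.2])).le]

lemma betaSubst_sq_add_sq (hy : y ∈ Ioo 0 1) : betaSubst a y ^ 2 + a ^ 2 = a ^ 2 / (1 - y) := by
  have : 1 - y ≠ 0 := by linarith [hy.2]
  rw [betaSubst_sq hy]
  field_simp
  ring

lemma hasDerivAt_betaSubst (hy : y ∈ Ioo 0 1) :
    HasDerivAt (betaSubst a) (a / (2 * (1 - y) ^ 2 * √(y / (1 - y)))) y := by
  have h1y : 1 - y ≠ 0 := by linarith [hy.2]
  have hratio : HasDerivAt (fun y : ℝ => y / (1 - y)) (1 / (1 - y) ^ 2) y := by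
    refine ((hasDerivAt_id y).div ((hasDerivAt_id y).const_sub 1) h1y).congr_deriv ?_
    simp only [id]
    ring
  have hr : 0 < y / (1 - y) := div_pos hy.1 (by linarith [hy.2])
  refine (((Real.hasDerivAt_sqrt hr.ne').comp y hratio).const_mul a).congr_deriv ?_
  field_simp

lemma bijOn_betaSubst (ha : 0 < a) : BijOn (betaSubst a) (Ioo 0 1) (Ioi 0) := by
  have hmaps : MapsTo (betaSubst a) (Ioo 0 1) (Ioi 0) := fun y hy =>
    mul_pos ha (Real.sqrt_pos.2 (div_pos hy.1 (by linarith [hy.2])))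
  have hmaps' : MapsTo (fun x : ℝ => x ^ 2 / (x ^ 2 + a ^ 2)) (Ioi 0) (Ioo 0 1) := fun x hx => by
    have hx : 0 < x := hx
    exact ⟨by positivity, (div_lt_one (by positivity)).2 (by nlinarith)⟩
  refine InvOn.bijOn ⟨fun y hy => ?_, fun x hx => ?_⟩ hmaps hmaps'
  · have : 1 - y ≠ 0 := by linarith [hy.2]
    simp only [betaSubst_sq hy]
    field_simp
    ring
  · have hx : 0 < x := hx
    have h1 : x ^ 2 / (x ^ 2 + a ^ 2) / (1 - x ^ 2 / (x ^ 2 + a ^ 2)) = (x / a) ^ 2 := by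
      field_simp
      ring
    simp only [betaSubst, h1, Real.sqrt_sq (div_pos hx ha).le]
    field_simp

lemma abs_deriv_betaSubst_smul (ha : 0 < a) (hy : y ∈ Ioo 0 1) (k : ℕ) (s : ℂ) :
    |a / (2 * (1 - y) ^ 2 * √(y / (1 - y)))| •
        (((betaSubst a y ^ 2 + a ^ 2 : ℝ) : ℂ) ^ (-s) * (betaSubst a y : ℂ) ^ k) =
      (a : ℂ) ^ ((k : ℂ) + 1 - 2 * s) / 2 *
        ((y : ℂ) ^ (((k : ℂ) + 1) / 2 - 1) * (1 - (y : ℂ)) ^ (s - ((k : ℂ) + 1) / 2 - 1)) := by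
  obtain ⟨hy0, hy1⟩ := hy
  have h1y : 0 < 1 - y := by linarith
  have hr : 0 < y / (1 - y) := div_pos hy0 h1y
  have hlog_r : Real.log √(y / (1 - y)) = (Real.log y - Real.log (1 - y)) / 2 := by
    rw [Real.log_sqrt hr.le, Real.log_div hy0.ne' h1y.ne']
  have hlog_subst :
      Real.log (betaSubst a y) = Real.log a + (Real.log y - Real.log (1 - y)) / 2 := by
    rw [betaSubst, Real.log_mul ha.ne' (Real.sqrt_pos.2 hr).ne', hlog_r]
  have hlog_deriv : Real.log (a / (2 * (1 - y) ^ 2 * √(y / (1 - y)))) =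
      Real.log a - Real.log 2 - 2 * Real.log (1 - y) -
        (Real.log y - Real.log (1 - y)) / 2 := by
    rw [Real.log_div ha.ne' (by positivity), Real.log_mul (by positivity) (by positivity),
      Real.log_mul (by positivity) (by positivity), Real.log_pow, hlog_r]
    push_cast
    ring
  have hlog_sq_add_sq : Real.log (a ^ 2 / (1 - y)) = 2 * Real.log a - Real.log (1 - y) := by
    rw [Real.log_div (by positivity) h1y.ne', Real.log_pow]
    push_cast
    ring
  have hsubst : 0 < betaSubst a y := mul_pos ha (Real.sqrt_pos.2 hr)
  have hderiv : 0 < a / (2 * (1 - y) ^ 2 * √(y / (1 - y))) := by positivity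
  -- Every factor is a power of a positive real, hence `exp (log _ * _)`; the identity becomes a
  -- linear one in `log a`, `log y`, `log (1 - y)` and `log 2`.
  rw [abs_of_pos hderiv, real_smul, betaSubst_sq_add_sq ⟨hy0, hy1⟩,
    ← cpow_natCast, ← ofReal_one, ← ofReal_sub, div_eq_mul_inv _ (2 : ℂ),
    ← cpow_neg_one, ← ofReal_ofNat, ← cpow_one ((_ / _ : ℝ) : ℂ),
    ofReal_cpow_def_of_pos hderiv, ofReal_cpow_def_of_pos (by positivity : 0 < a ^ 2 / (1 - y)),
    ofReal_cpow_def_of_pos hsubst, ofReal_cpow_def_of_pos ha, ofReal_cpow_def_of_pos two_pos,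
    ofReal_cpow_def_of_pos hy0, ofReal_cpow_def_of_pos h1y]
  simp only [← exp_add, hlog_deriv, hlog_subst, hlog_sq_add_sq]
  congr 1
  push_cast
  ring

lemma integral_Ioi_cpow_sq_add_sq_mul_pow (ha : 0 < a) (k : ℕ) (s : ℂ) :
    ∫ x in Ioi 0, ((x ^ 2 + a ^ 2 : ℝ) : ℂ) ^ (-s) * (x : ℂ) ^ k =
      (a : ℂ) ^ ((k : ℂ) + 1 - 2 * s) / 2 *
        betaIntegral (((k : ℂ) + 1) / 2) (s - ((k : ℂ) + 1) / 2) := by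
  rw [← (bijOn_betaSubst ha).image_eq, integral_image_eq_integral_abs_deriv_smul measurableSet_Ioo
      (fun y hy => (hasDerivAt_betaSubst hy).hasDerivWithinAt) (bijOn_betaSubst ha).injOn,
    setIntegral_congr_fun measurableSet_Ioo fun y hy => abs_deriv_betaSubst_smul ha hy k s,
    integral_const_mul, betaIntegral, intervalIntegral.integral_of_le zero_le_one,
    integral_Ioc_eq_integral_Ioo]

end BetaSubst

lemma integral_cpow_sq_add_sq_mul_pow {a : ℝ} (ha : 0 < a) {k : ℕ} (hk : Even k) (s : ℂ) :
    ∫ x : ℝ, ((x ^ 2 + a ^ 2 : ℝ) : ℂ) ^ (-s) * (x : ℂ) ^ k =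
      (a : ℂ) ^ ((k : ℂ) + 1 - 2 * s) *
        betaIntegral (((k : ℂ) + 1) / 2) (s - ((k : ℂ) + 1) / 2) := by
  rw [integral_eq_two_smul_integral_Ioi_of_even fun x => by simp [hk.neg_pow],
    integral_Ioi_cpow_sq_add_sq_mul_pow ha, real_smul]
  push_cast
  ring

namespace Complex

lemma hasDerivAt_inv_Gamma_zero : HasDerivAt (fun s => (Gamma s)⁻¹) 1 0 := by
  have h := (hasDerivAt_id (0 : ℂ)).fun_mul
    ((differentiable_one_div_Gamma.comp (differentiable_id.add_const 1)) 0).hasDerivAt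
  simp only [id, Function.comp_apply, zero_add, Gamma_one, inv_one, zero_mul, one_mul,
    add_zero] at h
  refine h.congr_of_eventuallyEq (Filter.Eventually.of_forall fun s => ?_)
  simpa only [one_div] using one_div_Gamma_eq_self_mul_one_div_Gamma_add_one s

lemma hasDerivAt_mul_inv_Gamma_zero {A : ℂ → ℂ} (hA : DifferentiableAt ℂ A 0) :
    HasDerivAt (fun s => A s * (Gamma s)⁻¹) (A 0) 0 := by
  simpa [Gamma_zero] using hA.hasDerivAt.fun_mul hasDerivAt_inv_Gamma_zero

lemma hasDerivAt_cpow_mul_Gamma_div_Gamma_zero {a c : ℂ} (ha : a ≠ 0)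
    (hc : ∀ m : ℕ, c / 2 ≠ m) :
    HasDerivAt (fun s => a ^ (c - 2 * s) * (Gamma (c / 2) * Gamma (s - c / 2) / Gamma s))
      (a ^ c * (Gamma (c / 2) * Gamma (-(c / 2)))) 0 := by
  have hGamma : DifferentiableAt ℂ (fun s => Gamma (s - c / 2)) 0 := by
    refine (differentiableAt_Gamma _ fun m hm => hc m ?_).comp 0 (differentiableAt_id.sub_const _)
    simpa using hm
  simpa only [id, div_eq_mul_inv, mul_assoc, mul_zero, sub_zero, zero_sub] using
    hasDerivAt_mul_inv_Gamma_zero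
      (((differentiableAt_id.const_mul 2).const_sub c).const_cpow (Or.inl ha) |>.fun_mul
        (hGamma.const_mul (Gamma (c / 2))))

lemma Gamma_mul_Gamma_neg {z : ℂ} (hz : z ≠ 0) :
    Gamma z * Gamma (-z) = -π / (z * sin (π * z)) := by
  have h := Gamma_mul_Gamma_one_sub z
  rw [sub_eq_neg_add, Gamma_add_one _ (neg_ne_zero.2 hz)] at h
  rw [mul_comm z, ← div_div, neg_div, ← h]
  field_simp

lemma sin_pi_mul_add_one_div_two_of_even {k : ℕ} (hk : Even k) :
    sin (π * (((k : ℂ) + 1) / 2)) = I ^ k := by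
  obtain ⟨m, rfl⟩ := hk.two_dvd
  rw [show (π : ℂ) * ((((2 * m : ℕ) : ℂ) + 1) / 2) = m * π + π / 2 by push_cast; ring,
    sin_add_pi_div_two, pow_mul, I_sq]
  exact_mod_cast Real.cos_nat_mul_pi m

end Complex

lemma add_one_div_two_ne_natCast_of_even {k : ℕ} (hk : Even k) (m : ℕ) :
    ((k : ℂ) + 1) / 2 ≠ m := by
  obtain ⟨j, rfl⟩ := hk.two_dvd
  intro hm
  have : ((2 * j + 1 : ℕ) : ℂ) = ((2 * m : ℕ) : ℂ) := by
    push_cast at hm ⊢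
    linear_combination 2 * hm
  have : 2 * j + 1 = 2 * m := by exact_mod_cast this
  omega

lemma integral_pow_of_even {k : ℕ} (hk : Even k) (a : ℝ) :
    ∫ x in (-a)..a, (x : ℂ) ^ k = 2 * a ^ (k + 1) / (k + 1) := by
  have h := integral_pow (a := -a) (b := a) k
  rw [(hk.add_one).neg_pow] at h
  simp only [← ofReal_pow, intervalIntegral.integral_ofReal, h]
  push_cast
  ring

/-- Let `a > 0` and `k` an even natural number.  The function
`s ↦ ∫_{−∞}^{∞} (x² + a²)^{−s} xᵏ dx` (defined for `Re s > (k+1)/2`) agrees there with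
its meromorphic continuation `F(s) = a^{k+1−2s} Γ((k+1)/2) Γ(s − (k+1)/2) / Γ(s)`
(the Beta function identity), and the regularized integral
`∫^∧ (ix)ᵏ log(x² + a²) dx := −(d/ds)|₀ ∫ (ix)ᵏ (x²+a²)^{−s} dx = −iᵏ F'(0)`
equals `π ∫_{−a}^{a} xᵏ dx`. -/
theorem regularized_integral_log_sq_add_sq (a : ℝ) (ha : 0 < a) (k : ℕ) (hk : Even k) :
    let F : ℂ → ℂ := fun s =>
      (a : ℂ) ^ ((k : ℂ) + 1 - 2 * s) *
        (Complex.Gamma (((k : ℂ) + 1) / 2) * Complex.Gamma (s - ((k : ℂ) + 1) / 2) /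
          Complex.Gamma s)
    (∀ s : ℂ, ((k : ℝ) + 1) / 2 < s.re →
        F s = ∫ x : ℝ, ((x ^ 2 + a ^ 2 : ℝ) : ℂ) ^ (-s) * (x : ℂ) ^ k) ∧
      -(Complex.I ^ k * deriv F 0) = (Real.pi : ℂ) * ∫ x in (-a)..a, (x : ℂ) ^ k := by
  intro F
  refine ⟨fun s hs => ?_, ?_⟩
  · have hu_re : (((k : ℂ) + 1) / 2).re = ((k : ℝ) + 1) / 2 := by simp
    rw [integral_cpow_sq_add_sq_mul_pow ha hk, betaIntegral_eq_Gamma_mul_div _ _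
      (by rw [hu_re]; positivity) (by rw [sub_re, hu_re]; linarith), add_sub_cancel]
  · have hc := add_one_div_two_ne_natCast_of_even hk
    rw [(hasDerivAt_cpow_mul_Gamma_div_Gamma_zero (ofReal_ne_zero.2 ha.ne') hc).deriv,
      Gamma_mul_Gamma_neg (by simpa using hc 0), sin_pi_mul_add_one_div_two_of_even hk,
      integral_pow_of_even hk, ← Nat.cast_add_one, cpow_natCast]
    have hI : I ^ k ≠ 0 := pow_ne_zero _ I_ne_zero
    push_cast
    field_simp
end

section
/- Let A ∈ GLₙ(ℤ) and suppose exactly one eigenvalue of A equals 1, with the corresponding eigenspace W = ker(1 − A) of rank 1 in ℤⁿ, and no other eigenvalue of A is a root of unity. Let A' be the endomorphism induced by A on ℤⁿ/W. Then there is a short exact sequence 0 → ℤ → coker(1 − Aᴺ) → coker(1 − A'ᴺ) → 0 for every N ≥ 1. -/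
/-!
The point is that `W ∩ (1 - Aᴺ)ℤⁿ = 0`. If `(1 - Aᴺ) y ∈ W` then `(1 - A)(1 - Aᴺ) y = 0`. Since `1`
is a simple root of `χ_A` and no other root is a root of unity, the cofactor `χ_A / (X - 1)` is
coprime to `Xᴺ - 1`, so a Bézout identity together with Cayley–Hamilton gives `(1 - A) y = 0`,
hence `(1 - Aᴺ) y = 0`. This trivial intersection makes `W → coker(1 - Aᴺ)` injective; the rest
of the exactness holds for any `A`-stable `W`, because `coker(1 - A'ᴺ) = ℤⁿ / (W + (1 - Aᴺ)ℤⁿ)`.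
-/

open Polynomial Matrix

lemma Matrix.aeval_mulVec_eq_zero_of_isCoprime {n K : Type*} [Fintype n] [DecidableEq n]
    [CommRing K] (B : Matrix n n K) {p q r : K[X]} (hχ : B.charpoly = p * q)
    (hrq : IsCoprime r q) {v : n → K} (hv : aeval B (p * r) *ᵥ v = 0) :
    aeval B p *ᵥ v = 0 := by
  obtain ⟨a, b, hab⟩ := hrq
  have hp : p = a * (p * r) + b * B.charpoly := by
    rw [hχ]; linear_combination (-p) * hab
  rw [hp, map_add, map_mul (aeval B) b, aeval_self_charpoly, mul_zero, add_zero,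
    map_mul (aeval B) a, ← mulVec_mulVec, hv, mulVec_zero]

lemma Polynomial.isCoprime_X_pow_sub_one_divByMonic {K : Type*} [Field K] [IsAlgClosed K]
    {χ : K[X]} (hmult : χ.rootMultiplicity 1 = 1)
    (hroots : ∀ z : K, χ.IsRoot z → z ≠ 1 → ∀ m : ℕ, 0 < m → z ^ m ≠ 1)
    {N : ℕ} (hN : 0 < N) : IsCoprime (X ^ N - 1) (χ /ₘ (X - C 1)) := by
  have hχ : χ ≠ 0 := by rintro rfl; simp at hmult
  have hfactor := pow_mul_divByMonic_rootMultiplicity_eq χ 1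
  have hq1 := eval_divByMonic_pow_rootMultiplicity_ne_zero 1 hχ
  rw [hmult, pow_one] at hfactor hq1
  rw [isCoprime_iff_aeval_ne_zero_of_isAlgClosed (K := K) K]
  intro z
  by_contra! hz
  rw [coe_aeval_eq_eval, eval_sub, eval_pow, eval_X, eval_one] at hz
  obtain ⟨hzN, hqz⟩ := hz
  by_cases hz1 : z = 1
  · subst hz1
    exact hq1 hqz
  · refine hroots z ?_ hz1 N hN (sub_eq_zero.mp hzN)
    rw [IsRoot, ← hfactor, eval_mul, hqz, mul_zero]

lemma Matrix.mulVec_one_sub_eq_zero_of_mul_one_sub_pow {n K : Type*} [Fintype n] [DecidableEq n]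
    [Field K] [IsAlgClosed K] (B : Matrix n n K) (hmult : B.charpoly.rootMultiplicity 1 = 1)
    (hroots : ∀ z : K, B.charpoly.IsRoot z → z ≠ 1 → ∀ m : ℕ, 0 < m → z ^ m ≠ 1)
    {N : ℕ} (hN : 0 < N) {v : n → K} (hv : ((1 - B) * (1 - B ^ N)) *ᵥ v = 0) :
    (1 - B) *ᵥ v = 0 := by
  have hχ : B.charpoly = (X - C 1) * (B.charpoly /ₘ (X - C 1)) := by
    simpa [hmult] using (pow_mul_divByMonic_rootMultiplicity_eq B.charpoly 1).symm
  have hsign : (1 - B) * (1 - B ^ N) = (B - 1) * (B ^ N - 1) := by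
    rw [← neg_sub B, ← neg_sub (B ^ N), neg_mul_neg]
  have h := B.aeval_mulVec_eq_zero_of_isCoprime hχ
    (isCoprime_X_pow_sub_one_divByMonic hmult hroots hN) (v := v) (by simpa [hsign] using hv)
  have h' : (B - 1) *ᵥ v = 0 := by simpa using h
  rwa [← neg_sub, neg_mulVec, neg_eq_zero] at h'

lemma Matrix.map_mulVec_eq_zero_iff {m n R S : Type*} [Fintype n] [CommRing R] [CommRing S]
    {f : R →+* S} (hf : Function.Injective f) (M : Matrix m n R) (v : n → R) :
    M.map f *ᵥ (f ∘ v) = 0 ↔ M *ᵥ v = 0 := by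
  have h : M.map f *ᵥ (f ∘ v) = f ∘ (M *ᵥ v) := funext fun i => (f.map_mulVec M v i).symm
  simp only [h, funext_iff, Function.comp_apply, Pi.zero_apply, map_eq_zero_iff f hf]

theorem Matrix.disjoint_ker_one_sub_range_one_sub_pow {n R K : Type*} [Fintype n] [DecidableEq n]
    [CommRing R] [Field K] [IsAlgClosed K] {φ : R →+* K} (hφ : Function.Injective φ)
    (A : Matrix n n R) (hmult : (A.map φ).charpoly.rootMultiplicity 1 = 1)
    (hroots : ∀ z : K, (A.map φ).charpoly.IsRoot z → z ≠ 1 → ∀ m : ℕ, 0 < m → z ^ m ≠ 1)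
    {N : ℕ} (hN : 0 < N) :
    Disjoint (LinearMap.ker (toLin' (1 - A))) (LinearMap.range (toLin' (1 - A ^ N))) := by
  rw [Submodule.disjoint_def]
  rintro _ hw ⟨y, rfl⟩
  rw [LinearMap.mem_ker, toLin'_apply, toLin'_apply, mulVec_mulVec] at hw
  have hy : (1 - A) *ᵥ y = 0 := by
    rw [← map_mulVec_eq_zero_iff hφ, ← RingHom.mapMatrix_apply] at hw ⊢
    simp only [map_mul, map_sub, map_one, map_pow, RingHom.mapMatrix_apply] at hw ⊢
    exact (A.map φ).mulVec_one_sub_eq_zero_of_mul_one_sub_pow hmult hroots hN hw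
  rw [toLin'_apply, ← geom_sum_mul_neg, ← mulVec_mulVec, hy, mulVec_zero]

namespace Submodule

variable {R M : Type*} [Ring R] [AddCommGroup M] [Module R M] {W : Submodule R M}
  {f : M →ₗ[R] M}

theorem range_id_sub_mapQ (hf : W ≤ W.comap f) :
    LinearMap.range (LinearMap.id - W.mapQ W f hf) =
      (LinearMap.range (LinearMap.id - f)).map W.mkQ := by
  have h : LinearMap.id - W.mapQ W f hf =
      W.mapQ W (LinearMap.id - f) (fun x hx => by simpa using W.sub_mem hx (hf hx)) := by
    ext; simp
  rw [h, range_mapQ]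

theorem exists_exact_coker_id_sub_mapQ (hf : W ≤ W.comap f)
    (hdisj : Disjoint W (LinearMap.range (LinearMap.id - f))) :
    ∃ (ι : W →ₗ[R] M ⧸ LinearMap.range (LinearMap.id - f))
      (p : M ⧸ LinearMap.range (LinearMap.id - f) →ₗ[R]
        (M ⧸ W) ⧸ LinearMap.range (LinearMap.id - W.mapQ W f hf)),
      Function.Injective ι ∧ Function.Surjective p ∧ LinearMap.range ι = LinearMap.ker p := by
  set C := LinearMap.range (LinearMap.id - f)
  set C' := LinearMap.range (LinearMap.id - W.mapQ W f hf)
  have hker : LinearMap.ker (C'.mkQ ∘ₗ W.mkQ) = W ⊔ C := by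
    rw [LinearMap.ker_comp, ker_mkQ, show C' = _ from range_id_sub_mapQ hf, comap_map_mkQ]
  refine ⟨C.mkQ ∘ₗ W.subtype, C.liftQ _ (hker ▸ le_sup_right), ?_, ?_, ?_⟩
  · rw [← LinearMap.ker_eq_bot, LinearMap.ker_comp, ker_mkQ, ← disjoint_iff_comap_eq_bot]
    exact hdisj
  · intro q
    obtain ⟨v, rfl⟩ := C'.mkQ_surjective.comp W.mkQ_surjective q
    exact ⟨C.mkQ v, rfl⟩
  · rw [ker_liftQ, hker, LinearMap.range_comp, range_subtype, map_sup, mkQ_map_self, sup_bot_eq]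

end Submodule

theorem coker_one_sub_pow_exact_seq_general {n : ℕ} (A : Matrix (Fin n) (Fin n) ℤ)
    (W : Submodule ℤ (Fin n → ℤ))
    (hW : W = LinearMap.ker (Matrix.toLin' ((1 : Matrix (Fin n) (Fin n) ℤ) - A)))
    (hWrank : Nonempty (W ≃ₗ[ℤ] ℤ))
    (hmult : (Matrix.charpoly (A.map ((↑) : ℤ → ℂ))).rootMultiplicity 1 = 1)
    (hroots : ∀ z : ℂ, (Matrix.charpoly (A.map ((↑) : ℤ → ℂ))).IsRoot z → z ≠ 1 →
      ∀ m : ℕ, 0 < m → z ^ m ≠ 1)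
    (hWN : ∀ N : ℕ, W ≤ W.comap (Matrix.toLin' (A ^ N))) :
    ∀ N : ℕ, 1 ≤ N →
      ∃ (ι : ℤ →ₗ[ℤ]
            ((Fin n → ℤ) ⧸
              LinearMap.range (Matrix.toLin' ((1 : Matrix (Fin n) (Fin n) ℤ) - A ^ N))))
        (p : ((Fin n → ℤ) ⧸
              LinearMap.range (Matrix.toLin' ((1 : Matrix (Fin n) (Fin n) ℤ) - A ^ N))) →ₗ[ℤ]
            (((Fin n → ℤ) ⧸ W) ⧸
              LinearMap.range
                (LinearMap.id - Submodule.mapQ W W (Matrix.toLin' (A ^ N)) (hWN N)))),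
        Function.Injective ι ∧ Function.Surjective p ∧ LinearMap.range ι = LinearMap.ker p := by
  intro N hN
  obtain ⟨e⟩ := hWrank
  have hdisj : Disjoint W (LinearMap.range (toLin' (1 - A ^ N))) :=
    hW ▸ disjoint_ker_one_sub_range_one_sub_pow (φ := Int.castRingHom ℂ) Int.cast_injective
      A hmult hroots hN
  rw [map_sub, toLin'_one] at hdisj ⊢
  obtain ⟨ι, p, hι, hp, hexact⟩ := Submodule.exists_exact_coker_id_sub_mapQ (hWN N) hdisj
  refine ⟨ι ∘ₗ e.symm.toLinearMap, p, hι.comp e.symm.injective, hp, ?_⟩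
  rw [LinearMap.range_comp_of_range_eq_top _ e.symm.range, hexact]

/-- Let `A ∈ GLₙ(ℤ)` with exactly one eigenvalue equal to `1` (counted with
multiplicity in the characteristic polynomial), whose fixed lattice
`W = ker(1 − A) ⊆ ℤⁿ` has rank `1`, and none of whose other eigenvalues is a root of
unity.  Let `A'` be the endomorphism induced by `A` on `ℤⁿ/W`.  Then for every `N ≥ 1`
there is a short exact sequence `0 → ℤ → coker(1 − Aᴺ) → coker(1 − A'ᴺ) → 0`. -/
theorem coker_one_sub_pow_exact_seq {n : ℕ} (A : Matrix (Fin n) (Fin n) ℤ)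
    (hA : IsUnit A.det)
    (W : Submodule ℤ (Fin n → ℤ))
    (hW : W = LinearMap.ker (Matrix.toLin' ((1 : Matrix (Fin n) (Fin n) ℤ) - A)))
    (hWrank : Nonempty (W ≃ₗ[ℤ] ℤ))
    (hmult : (Matrix.charpoly (A.map ((↑) : ℤ → ℂ))).rootMultiplicity 1 = 1)
    (hroots : ∀ z : ℂ, (Matrix.charpoly (A.map ((↑) : ℤ → ℂ))).IsRoot z → z ≠ 1 →
      ∀ m : ℕ, 0 < m → z ^ m ≠ 1)
    (hWN : ∀ N : ℕ, W ≤ W.comap (Matrix.toLin' (A ^ N))) :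
    ∀ N : ℕ, 1 ≤ N →
      ∃ (ι : ℤ →ₗ[ℤ]
            ((Fin n → ℤ) ⧸
              LinearMap.range (Matrix.toLin' ((1 : Matrix (Fin n) (Fin n) ℤ) - A ^ N))))
        (p : ((Fin n → ℤ) ⧸
              LinearMap.range (Matrix.toLin' ((1 : Matrix (Fin n) (Fin n) ℤ) - A ^ N))) →ₗ[ℤ]
            (((Fin n → ℤ) ⧸ W) ⧸
              LinearMap.range
                (LinearMap.id - Submodule.mapQ W W (Matrix.toLin' (A ^ N)) (hWN N)))),
        Function.Injective ι ∧ Function.Surjective p ∧ LinearMap.range ι = LinearMap.ker p :=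
  coker_one_sub_pow_exact_seq_general A W hW hWrank hmult hroots hWN
end

section
/- Let f : A₁ → A₂ be a map of integral metrized lattices of rank at most n, and suppose every singular value of f ⊗ ℝ is at most M, where M ≥ 1. Then 1 ≤ vol(ker f) ≤ vol(A₁) · Mⁿ, and likewise 1 ≤ vol(image f) ≤ vol(A₁) · Mⁿ. -/
/-- The Gram covolume of a family of vectors in a real inner product space: the square
root of the absolute value of the determinant of the Gram matrix `⟪vᵢ, vⱼ⟫`.  When the
family is (the image of) a `ℤ`-basis of a lattice, this is the covolume `vol` of the
lattice. -/
noncomputable def gramVol {E : Type*} [NormedAddCommGroup E] [InnerProductSpace ℝ E]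
    {n : ℕ} (v : Fin n → E) : ℝ :=
  Real.sqrt |(Matrix.of fun i j => (inner ℝ (v i) (v j) : ℝ)).det|

/-!
Extend a `ℤ`-basis of `ker f` by lifts `cⱼ` of a `ℤ`-basis of `image f` to a `ℤ`-basis of `A₁`,
and let `wⱼ` be the component of `cⱼ` orthogonal to `ker f ⊗ ℝ`. The Gram determinant then splits
as `vol(A₁)² = vol(ker f)² · G(w)`, while `F` kills `ker f ⊗ ℝ`, so it maps `w` onto the basis of
`image f` and, adding one vector at a time as in Gram–Schmidt, `vol(image f)² ≤ M²ʳ · G(w)`.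
Hence `vol(ker f) · vol(image f) ≤ Mʳ · vol(A₁)`. Finally an integral lattice has covolume at
least `1`: its Gram determinant is a nonzero integer.
-/

open Matrix RealInnerProductSpace

namespace Submodule

variable {E : Type*} [NormedAddCommGroup E] [InnerProductSpace ℝ E]

theorem norm_sub_starProjection_le {K : Submodule ℝ E} [K.HasOrthogonalProjection] (x : E)
    {y : E} (hy : y ∈ K) : ‖x - K.starProjection x‖ ≤ ‖x - y‖ := by
  rw [starProjection_minimal]
  exact ciInf_le ⟨0, Set.forall_mem_range.mpr fun _ => norm_nonneg _⟩ (⟨y, hy⟩ : K)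

theorem norm_sub_starProjection_map_le {E' : Type*} [NormedAddCommGroup E']
    [InnerProductSpace ℝ E'] {F : E →ₗ[ℝ] E'} {M : ℝ} (hF : ∀ x, ‖F x‖ ≤ M * ‖x‖)
    {K : Submodule ℝ E} {K' : Submodule ℝ E'} [K.HasOrthogonalProjection]
    [K'.HasOrthogonalProjection] (hKK' : K ≤ K'.comap F) (x : E) :
    ‖F x - K'.starProjection (F x)‖ ≤ M * ‖x - K.starProjection x‖ :=
  calc ‖F x - K'.starProjection (F x)‖ ≤ ‖F x - F (K.starProjection x)‖ :=
        norm_sub_starProjection_le _ (hKK' (K.starProjection_apply_mem x))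
    _ = ‖F (x - K.starProjection x)‖ := by rw [map_sub]
    _ ≤ M * ‖x - K.starProjection x‖ := hF _

instance hasOrthogonalProjection_span_range {ι : Type*} [Finite ι] (u : ι → E) :
    (Submodule.span ℝ (Set.range u)).HasOrthogonalProjection := by
  have := FiniteDimensional.span_of_finite ℝ (Set.finite_range u)
  infer_instance

end Submodule

namespace Matrix

variable {E : Type*} [NormedAddCommGroup E] [InnerProductSpace ℝ E]

theorem det_gram_nonneg {ι : Type*} [Fintype ι] [DecidableEq ι] (v : ι → E) :
    0 ≤ (gram ℝ v).det :=
  (posSemidef_gram ℝ v).det_nonneg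

theorem gram_sum_smul {ι κ : Type*} [Fintype ι] (v : ι → E) (T : Matrix ι κ ℝ) :
    gram ℝ (fun j => ∑ i, T i j • v i) = Tᵀ * gram ℝ v * T := by
  ext a b
  simp only [gram_apply, sum_inner, inner_sum, real_inner_smul_left, real_inner_smul_right,
    mul_apply, transpose_apply, Finset.sum_mul]
  exact Finset.sum_congr rfl fun i _ => Finset.sum_congr rfl fun j _ => by ring

theorem gram_sum_elim_of_orthogonal {ι κ : Type*} {u : ι → E} {w : κ → E}
    (huw : ∀ i j, ⟪u i, w j⟫ = 0) :
    gram ℝ (Sum.elim u w) = fromBlocks (gram ℝ u) 0 0 (gram ℝ w) := by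
  ext (i | i) (j | j)
  · rfl
  · exact huw i j
  · exact (real_inner_comm _ _).trans (huw j i)
  · rfl

theorem det_gram_sum_elim {ι κ : Type*} [Fintype ι] [Fintype κ] [DecidableEq ι] [DecidableEq κ]
    (u : ι → E) {c w : κ → E} (hcw : ∀ j, c j - w j ∈ Submodule.span ℝ (Set.range u))
    (huw : ∀ i j, ⟪u i, w j⟫ = 0) :
    (gram ℝ (Sum.elim u c)).det = (gram ℝ u).det * (gram ℝ w).det := by
  choose a ha using fun j => (Submodule.mem_span_range_iff_exists_fun ℝ).1 (hcw j)
  set T : Matrix (ι ⊕ κ) (ι ⊕ κ) ℝ := fromBlocks 1 (of fun i j => a j i) 0 1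
  have hT : (fun j => ∑ i, T i j • Sum.elim u w i) = Sum.elim u c := by
    ext (j | j) <;> simp [T, Fintype.sum_sum_type, one_apply, ite_smul, ha]
  rw [← hT, gram_sum_smul, det_mul, det_mul, det_transpose, gram_sum_elim_of_orthogonal huw,
    det_fromBlocks_zero₁₂]
  simp [T]

theorem det_gram_sum_elim_sub_starProjection {ι κ : Type*} [Fintype ι] [Fintype κ]
    [DecidableEq ι] [DecidableEq κ] (u : ι → E) (c : κ → E) :
    (gram ℝ (Sum.elim u c)).det = (gram ℝ u).det * (gram ℝ fun j =>
      c j - (Submodule.span ℝ (Set.range u)).starProjection (c j)).det := by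
  set K := Submodule.span ℝ (Set.range u)
  refine det_gram_sum_elim u (fun j => ?_) fun i j => ?_
  · rw [sub_sub_cancel]
    exact K.starProjection_apply_mem (c j)
  · exact (Submodule.mem_orthogonal K _).1 (K.sub_starProjection_mem_orthogonal (c j)) _
      (Submodule.subset_span ⟨i, rfl⟩)

theorem det_gram_succ {m : ℕ} (v : Fin (m + 1) → E) :
    (gram ℝ v).det = (gram ℝ (Fin.init v)).det * ‖v (Fin.last m) -
      (Submodule.span ℝ (Set.range (Fin.init v))).starProjection (v (Fin.last m))‖ ^ 2 := by
  have hv : Sum.elim (Fin.init v) (fun _ : Fin 1 => v (Fin.last m)) = v ∘ finSumFinEquiv := by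
    ext (i | i)
    · rfl
    · obtain rfl := Fin.fin_one_eq_zero i
      rfl
  have hsplit := det_gram_sum_elim_sub_starProjection (Fin.init v) fun _ : Fin 1 => v (Fin.last m)
  rw [hv, show gram ℝ (v ∘ finSumFinEquiv) = (gram ℝ v).submatrix finSumFinEquiv finSumFinEquiv
    from rfl, det_submatrix_equiv_self] at hsplit
  rw [hsplit, det_fin_one, gram_apply, real_inner_self_eq_norm_sq]

theorem det_gram_comp_le {E' : Type*} [NormedAddCommGroup E'] [InnerProductSpace ℝ E']
    {F : E →ₗ[ℝ] E'} {M : ℝ} (hF : ∀ x, ‖F x‖ ≤ M * ‖x‖) {r : ℕ} (v : Fin r → E) :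
    (gram ℝ (F ∘ v)).det ≤ (M ^ 2) ^ r * (gram ℝ v).det := by
  induction r with
  | zero => simp
  | succ m ih =>
    have hKK' : Submodule.span ℝ (Set.range (Fin.init v)) ≤
        (Submodule.span ℝ (Set.range (Fin.init (F ∘ v)))).comap F := by
      rw [Submodule.span_le]
      rintro _ ⟨i, rfl⟩
      exact Submodule.subset_span ⟨i, rfl⟩
    have hlast := pow_le_pow_left₀ (norm_nonneg _)
      (Submodule.norm_sub_starProjection_map_le hF hKK' (v (Fin.last m))) 2
    rw [det_gram_succ (F ∘ v), det_gram_succ v]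
    calc _ ≤ (M ^ 2) ^ m * (gram ℝ (Fin.init v)).det * (M * _) ^ 2 :=
          mul_le_mul (ih _) hlast (by positivity)
            (mul_nonneg (by positivity) (det_gram_nonneg _))
      _ = _ := by ring

theorem one_le_det_gram_of_linearIndependent_int {ι : Type*} [Fintype ι] [DecidableEq ι]
    {v : ι → E} (hv : LinearIndependent ℤ v) (hint : ∀ i j, ∃ m : ℤ, ⟪v i, v j⟫ = m) :
    1 ≤ (gram ℝ v).det := by
  choose N hN using hint
  have hG : gram ℝ v = (of N).map ((↑) : ℤ → ℝ) := by ext; simp [hN]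
  have hdet : (gram ℝ v).det = ((of N).det : ℝ) := by
    rw [hG]; exact ((Int.castRingHom ℝ).map_det _).symm
  have hN0 : (of N).det ≠ 0 := by
    intro h
    -- an integral kernel vector of the Gram matrix is a `ℤ`-relation among the `v i`
    obtain ⟨a, ha0, ha⟩ := exists_mulVec_eq_zero_iff.2 h
    have hGa : gram ℝ v *ᵥ ((↑) ∘ a) = 0 := by
      ext i; simpa [hG, ha] using ((Int.castRingHom ℝ).map_mulVec (of N) a i).symm
    have hsum : ∑ i, a i • v i = 0 := by
      have := star_dotProduct_gram_mulVec (𝕜 := ℝ) v ((↑) ∘ a) ((↑) ∘ a)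
      rw [hGa, dotProduct_zero, eq_comm, inner_self_eq_zero] at this
      simpa [Int.cast_smul_eq_zsmul] using this
    exact ha0 (funext (Fintype.linearIndependent_iff.1 hv a hsum))
  have h0 : (0 : ℤ) ≤ (of N).det := by exact_mod_cast hdet ▸ det_gram_nonneg v
  rw [hdet]
  exact_mod_cast (show (1 : ℤ) ≤ (of N).det by omega)

theorem det_gram_comp_basis_eq {L ι κ : Type*} [AddCommGroup L] [Module ℤ L] [Fintype ι]
    [DecidableEq ι] [Fintype κ] [DecidableEq κ] (φ : L →ₗ[ℤ] E) (b : Module.Basis ι ℤ L)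
    (c : Module.Basis κ ℤ L) : (gram ℝ (φ ∘ b)).det = (gram ℝ (φ ∘ c)).det := by
  set e := b.indexEquiv c
  set c' := c.reindex e.symm
  set T : Matrix ι ι ℝ := (b.toMatrix c').map (↑)
  have hc' : φ ∘ c' = fun j => ∑ i, T i j • (φ ∘ b) i := by
    ext j
    rw [Function.comp_apply, ← b.sum_toMatrix_smul_self c' j, map_sum]
    simp [T, Int.cast_smul_eq_zsmul]
  have hT : T.det ^ 2 = 1 := by
    rw [show T.det = ((b.toMatrix c').det : ℝ) from ((Int.castRingHom ℝ).map_det _).symm,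
      ← Module.Basis.det_apply]
    exact_mod_cast Int.isUnit_sq (b.isUnit_det c')
  have hbc' : (gram ℝ (φ ∘ b)).det = (gram ℝ (φ ∘ c')).det := by
    rw [hc', gram_sum_smul, det_mul, det_mul, det_transpose]
    linear_combination -(gram ℝ (φ ∘ b)).det * hT
  rw [hbc', ← det_submatrix_equiv_self e (gram ℝ (φ ∘ c))]
  congr 1
  ext i j
  simp [c', gram_apply]

end Matrix

section KernelAndLift

variable {R M N ι κ : Type*} [Ring R] [AddCommGroup M] [Module R M] [AddCommGroup N] [Module R N]
  [Fintype ι] [Fintype κ] {f : M →ₗ[R] N} {u : ι → M} {c : κ → M}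

theorem linearIndependent_sum_elim_of_map_eq_zero (hu : LinearIndependent R u)
    (hfu : ∀ i, f (u i) = 0) (hfc : LinearIndependent R (f ∘ c)) :
    LinearIndependent R (Sum.elim u c) := by
  rw [Fintype.linearIndependent_iff] at hu hfc ⊢
  intro g hg
  rw [Fintype.sum_sum_type] at hg
  have hg_inr : ∀ j, g (Sum.inr j) = 0 := hfc _ (by simpa [hfu] using congrArg f hg)
  have hg_inl : ∀ i, g (Sum.inl i) = 0 := hu _ (by simpa [hg_inr] using hg)
  rintro (i | j)
  exacts [hg_inl i, hg_inr j]

theorem span_sum_elim_eq_top (hu : Submodule.span R (Set.range u) = LinearMap.ker f)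
    (hc : Submodule.span R (Set.range (f ∘ c)) = LinearMap.range f) :
    Submodule.span R (Set.range (Sum.elim u c)) = ⊤ := by
  refine Submodule.eq_top_iff'.2 fun x => ?_
  obtain ⟨a, ha⟩ := (Submodule.mem_span_range_iff_exists_fun R).1
    (hc ▸ LinearMap.mem_range_self f x)
  have hker : x - ∑ j, a j • c j ∈ Submodule.span R (Set.range u) := by
    rw [hu, LinearMap.mem_ker, map_sub, map_sum]
    simpa [sub_eq_zero] using ha.symm
  obtain ⟨m, hm⟩ := (Submodule.mem_span_range_iff_exists_fun R).1 hker
  refine (Submodule.mem_span_range_iff_exists_fun R).2 ⟨Sum.elim m a, ?_⟩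
  simp [Fintype.sum_sum_type, hm]

end KernelAndLift

theorem gramVol_eq_sqrt_det_gram {E : Type*} [NormedAddCommGroup E] [InnerProductSpace ℝ E]
    {n : ℕ} (v : Fin n → E) : gramVol v = √(gram ℝ v).det := by
  rw [gramVol, ← abs_of_nonneg (det_gram_nonneg v)]
  rfl

theorem sqrt_le_sqrt_mul_pow {x y M : ℝ} {n : ℕ} (hM : 0 ≤ M) (h : x ≤ (M ^ 2) ^ n * y) :
    √x ≤ √y * M ^ n :=
  calc √x ≤ √((M ^ n) ^ 2 * y) := Real.sqrt_le_sqrt (h.trans_eq (by ring))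
    _ = √y * M ^ n := by rw [Real.sqrt_mul (by positivity), Real.sqrt_sq (by positivity), mul_comm]

theorem det_gram_ker_mul_det_gram_range_le {E₁ E₂ L₁ L₂ ι κ : Type*} [NormedAddCommGroup E₁]
    [InnerProductSpace ℝ E₁] [NormedAddCommGroup E₂] [InnerProductSpace ℝ E₂] [AddCommGroup L₁]
    [Module ℤ L₁] [AddCommGroup L₂] [Module ℤ L₂] [Fintype ι] [DecidableEq ι] [Fintype κ]
    [DecidableEq κ] {r : ℕ} {ι₁ : L₁ →ₗ[ℤ] E₁} {ι₂ : L₂ →ₗ[ℤ] E₂} (b₁ : Module.Basis ι ℤ L₁)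
    {f : L₁ →ₗ[ℤ] L₂} {F : E₁ →ₗ[ℝ] E₂} (hcompat : ∀ v, F (ι₁ v) = ι₂ (f v)) {M : ℝ}
    (hF : ∀ x, ‖F x‖ ≤ M * ‖x‖) {bk : κ → L₁} (hbkind : LinearIndependent ℤ bk)
    (hbkspan : Submodule.span ℤ (Set.range bk) = LinearMap.ker f) {bi : Fin r → L₂}
    (hbiind : LinearIndependent ℤ bi)
    (hbispan : Submodule.span ℤ (Set.range bi) = LinearMap.range f) :
    (gram ℝ (ι₁ ∘ bk)).det * (gram ℝ (ι₂ ∘ bi)).det ≤ (M ^ 2) ^ r * (gram ℝ (ι₁ ∘ b₁)).det := by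
  have hbk : ∀ i, f (bk i) = 0 := fun i =>
    hbkspan.le (Submodule.subset_span (Set.mem_range_self i))
  choose c hc using fun j =>
    LinearMap.mem_range.1 (hbispan.le (Submodule.subset_span (Set.mem_range_self j)))
  have hfc : f ∘ c = bi := funext hc
  let B := Module.Basis.mk (linearIndependent_sum_elim_of_map_eq_zero hbkind hbk (hfc ▸ hbiind))
    (span_sum_elim_eq_top hbkspan (hfc ▸ hbispan)).ge
  set K := Submodule.span ℝ (Set.range (ι₁ ∘ bk))
  set w : Fin r → E₁ := fun j => ι₁ (c j) - K.starProjection (ι₁ (c j))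
  have hsplit : (gram ℝ (ι₁ ∘ b₁)).det = (gram ℝ (ι₁ ∘ bk)).det * (gram ℝ w).det := by
    rw [det_gram_comp_basis_eq ι₁ b₁ B, ← det_gram_sum_elim_sub_starProjection]
    congr
    ext (i | j) <;> simp [B]
  have hKF : K ≤ LinearMap.ker F := by
    refine Submodule.span_le.2 ?_
    rintro _ ⟨i, rfl⟩
    simp [hcompat, hbk]
  have hFw : F ∘ w = ι₂ ∘ bi := by
    ext j
    have := LinearMap.mem_ker.1 (hKF (K.starProjection_apply_mem (ι₁ (c j))))
    simp [w, this, hcompat, hc]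
  calc (gram ℝ (ι₁ ∘ bk)).det * (gram ℝ (ι₂ ∘ bi)).det
      ≤ (gram ℝ (ι₁ ∘ bk)).det * ((M ^ 2) ^ r * (gram ℝ w).det) :=
        mul_le_mul_of_nonneg_left (hFw ▸ det_gram_comp_le hF w) (det_gram_nonneg _)
    _ = (M ^ 2) ^ r * (gram ℝ (ι₁ ∘ b₁)).det := by rw [hsplit]; ring

theorem vol_ker_and_vol_image_bounds_general {E₁ E₂ : Type*} [NormedAddCommGroup E₁]
    [InnerProductSpace ℝ E₁] [NormedAddCommGroup E₂] [InnerProductSpace ℝ E₂]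
    {L₁ L₂ : Type*} [AddCommGroup L₁] [Module ℤ L₁] [AddCommGroup L₂] [Module ℤ L₂]
    {n n₁ n₂ k r : ℕ} (hn₂ : n₂ ≤ n)
    (ι₁ : L₁ →ₗ[ℤ] E₁) (ι₂ : L₂ →ₗ[ℤ] E₂)
    (b₁ : Module.Basis (Fin n₁) ℤ L₁) (b₂ : Module.Basis (Fin n₂) ℤ L₂)
    (hb₁ind : LinearIndependent ℝ fun i => ι₁ (b₁ i))
    (hb₂ind : LinearIndependent ℝ fun i => ι₂ (b₂ i))
    -- integrality of both lattices
    (hint₁ : ∀ x y : L₁, ∃ m : ℤ, (inner ℝ (ι₁ x) (ι₁ y) : ℝ) = m)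
    (hint₂ : ∀ x y : L₂, ∃ m : ℤ, (inner ℝ (ι₂ x) (ι₂ y) : ℝ) = m)
    (f : L₁ →ₗ[ℤ] L₂) (F : E₁ →ₗ[ℝ] E₂)
    (hcompat : ∀ v : L₁, F (ι₁ v) = ι₂ (f v))
    (M : ℝ) (hM : 1 ≤ M)
    -- every singular value of `f ⊗ ℝ = F` is at most `M`
    (hF : ∀ x : E₁, ‖F x‖ ≤ M * ‖x‖)
    -- a `ℤ`-basis of `ker f`
    (bk : Fin k → L₁) (hbkind : LinearIndependent ℤ bk)
    (hbkspan : Submodule.span ℤ (Set.range bk) = LinearMap.ker f)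
    -- a `ℤ`-basis of `image f`
    (bi : Fin r → L₂) (hbiind : LinearIndependent ℤ bi)
    (hbispan : Submodule.span ℤ (Set.range bi) = LinearMap.range f) :
    (1 ≤ gramVol (fun i => ι₁ (bk i)) ∧
        gramVol (fun i => ι₁ (bk i)) ≤ gramVol (fun i => ι₁ (b₁ i)) * M ^ n) ∧
      (1 ≤ gramVol (fun i => ι₂ (bi i)) ∧
        gramVol (fun i => ι₂ (bi i)) ≤ gramVol (fun i => ι₁ (b₁ i)) * M ^ n) := by
  have hinj₁ := ι₁.injective_of_linearIndependent b₁.span_eq (hb₁ind.restrict_scalars' ℤ)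
  have hinj₂ := ι₂.injective_of_linearIndependent b₂.span_eq (hb₂ind.restrict_scalars' ℤ)
  have hker : 1 ≤ (gram ℝ (ι₁ ∘ bk)).det := one_le_det_gram_of_linearIndependent_int
    (hbkind.map' ι₁ (LinearMap.ker_eq_bot.2 hinj₁)) fun _ _ => hint₁ _ _
  have himg : 1 ≤ (gram ℝ (ι₂ ∘ bi)).det := one_le_det_gram_of_linearIndependent_int
    (hbiind.map' ι₂ (LinearMap.ker_eq_bot.2 hinj₂)) fun _ _ => hint₂ _ _
  have hrn : r ≤ n := by
    have := Module.Finite.of_basis b₂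
    have hrn₂ : r ≤ n₂ := by
      simpa [Module.finrank_eq_card_basis b₂] using hbiind.fintype_card_le_finrank
    exact hrn₂.trans hn₂
  have hprod := det_gram_ker_mul_det_gram_range_le b₁ hcompat hF hbkind hbkspan hbiind hbispan
  have hpow : (M ^ 2) ^ r * (gram ℝ (ι₁ ∘ b₁)).det ≤ (M ^ 2) ^ n * (gram ℝ (ι₁ ∘ b₁)).det :=
    mul_le_mul_of_nonneg_right (pow_le_pow_right₀ (one_le_pow₀ hM) hrn) (det_gram_nonneg _)
  have hM₀ : 0 ≤ M := zero_le_one.trans hM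
  simp only [gramVol_eq_sqrt_det_gram]
  refine ⟨⟨Real.one_le_sqrt.2 hker, sqrt_le_sqrt_mul_pow hM₀ ?_⟩,
    ⟨Real.one_le_sqrt.2 himg, sqrt_le_sqrt_mul_pow hM₀ ?_⟩⟩
  · exact (le_mul_of_one_le_right (zero_le_one.trans hker) himg).trans (hprod.trans hpow)
  · exact (le_mul_of_one_le_left (zero_le_one.trans himg) hker).trans (hprod.trans hpow)

/-- Let `f : A₁ → A₂` be a map of integral metrized lattices of rank at most `n`
(realized as full lattices, via `ι₁`, `ι₂`, in finite-dimensional real inner product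
spaces, with integer-valued inner products), and suppose every singular value of the
real extension `F` of `f` is at most `M ≥ 1` (equivalently, `‖F x‖ ≤ M ‖x‖` for all
`x`).  Then `1 ≤ vol(ker f) ≤ vol(A₁) · Mⁿ` and `1 ≤ vol(image f) ≤ vol(A₁) · Mⁿ`,
where `ker f` and `image f` carry the induced metrics. -/
theorem vol_ker_and_vol_image_bounds {E₁ E₂ : Type*} [NormedAddCommGroup E₁]
    [InnerProductSpace ℝ E₁] [NormedAddCommGroup E₂] [InnerProductSpace ℝ E₂]
    [FiniteDimensional ℝ E₁] [FiniteDimensional ℝ E₂]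
    {L₁ L₂ : Type*} [AddCommGroup L₁] [Module ℤ L₁] [AddCommGroup L₂] [Module ℤ L₂]
    {n n₁ n₂ k r : ℕ} (hn₁ : n₁ ≤ n) (hn₂ : n₂ ≤ n)
    (ι₁ : L₁ →ₗ[ℤ] E₁) (ι₂ : L₂ →ₗ[ℤ] E₂)
    (b₁ : Module.Basis (Fin n₁) ℤ L₁) (b₂ : Module.Basis (Fin n₂) ℤ L₂)
    (hb₁ind : LinearIndependent ℝ fun i => ι₁ (b₁ i))
    (hb₁span : Submodule.span ℝ (Set.range fun i => ι₁ (b₁ i)) = ⊤)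
    (hb₂ind : LinearIndependent ℝ fun i => ι₂ (b₂ i))
    (hb₂span : Submodule.span ℝ (Set.range fun i => ι₂ (b₂ i)) = ⊤)
    -- integrality of both lattices
    (hint₁ : ∀ x y : L₁, ∃ m : ℤ, (inner ℝ (ι₁ x) (ι₁ y) : ℝ) = m)
    (hint₂ : ∀ x y : L₂, ∃ m : ℤ, (inner ℝ (ι₂ x) (ι₂ y) : ℝ) = m)
    (f : L₁ →ₗ[ℤ] L₂) (F : E₁ →ₗ[ℝ] E₂)
    (hcompat : ∀ v : L₁, F (ι₁ v) = ι₂ (f v))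
    (M : ℝ) (hM : 1 ≤ M)
    -- every singular value of `f ⊗ ℝ = F` is at most `M`
    (hF : ∀ x : E₁, ‖F x‖ ≤ M * ‖x‖)
    -- a `ℤ`-basis of `ker f`
    (bk : Fin k → L₁) (hbkind : LinearIndependent ℤ bk)
    (hbkspan : Submodule.span ℤ (Set.range bk) = LinearMap.ker f)
    -- a `ℤ`-basis of `image f`
    (bi : Fin r → L₂) (hbiind : LinearIndependent ℤ bi)
    (hbispan : Submodule.span ℤ (Set.range bi) = LinearMap.range f) :
    (1 ≤ gramVol (fun i => ι₁ (bk i)) ∧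
        gramVol (fun i => ι₁ (bk i)) ≤ gramVol (fun i => ι₁ (b₁ i)) * M ^ n) ∧
      (1 ≤ gramVol (fun i => ι₂ (bi i)) ∧
        gramVol (fun i => ι₂ (bi i)) ≤ gramVol (fun i => ι₁ (b₁ i)) * M ^ n) :=
  vol_ker_and_vol_image_bounds_general hn₂ ι₁ ι₂ b₁ b₂ hb₁ind hb₂ind hint₁ hint₂ f F hcompat M hM hF
    bk hbkind hbkspan bi hbiind hbispan
end
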